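/- There exists a constant C > 0 such that for every real n > 0 and every ℝ-word w over X = {a, b} with coarse length k(w) ≥ 2 whose evaluation w̄ has ℝ²-component equal to (n, 0), writing Δ = ℓ(w) − n (which is nonnegative) and B(w̄) for the last coordinate of w̄, one has −B(w̄) ≥ n³/(24·(k(w) − 1)²) − C·Δ²·max(Δ, n/(k(w) − 1)). -/

import Mathlib

noncomputable section

/-- The Engel Lie group `Ē`: underlying set `ℝ² × ℝ × ℝ`, with coordinates
`(x, y)` (endpoint), `A` (signed area) and `B` (the `y`-moment). -/
@[ext]
structure Engel where
  x : ℝ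
  y : ℝ
  A : ℝ
  B : ℝ

namespace Engel

instance : Mul Engel :=
  ⟨fun g h =>
    ⟨g.x + h.x, g.y + h.y,
     g.A + h.A + (g.x * h.y - g.y * h.x) / 2,
     g.B + h.B + g.y * h.A + (2 * g.y + h.y) * (g.x * h.y - g.y * h.x) / 6⟩⟩

instance : One Engel := ⟨⟨0, 0, 0, 0⟩⟩

instance : Inv Engel := ⟨fun g => ⟨-g.x, -g.y, -g.A, -g.B + g.y * g.A⟩⟩

@[simp] lemma mul_x (g h : Engel) : (g * h).x = g.x + h.x := rfl
@[simp] lemma mul_y (g h : Engel) : (g * h).y = g.y + h.y := rfl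
@[simp] lemma mul_A (g h : Engel) :
    (g * h).A = g.A + h.A + (g.x * h.y - g.y * h.x) / 2 := rfl
@[simp] lemma mul_B (g h : Engel) :
    (g * h).B = g.B + h.B + g.y * h.A
      + (2 * g.y + h.y) * (g.x * h.y - g.y * h.x) / 6 := rfl
@[simp] lemma one_x : (1 : Engel).x = 0 := rfl
@[simp] lemma one_y : (1 : Engel).y = 0 := rfl
@[simp] lemma one_A : (1 : Engel).A = 0 := rfl
@[simp] lemma one_B : (1 : Engel).B = 0 := rfl
@[simp] lemma inv_x (g : Engel) : g⁻¹.x = -g.x := rfl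
@[simp] lemma inv_y (g : Engel) : g⁻¹.y = -g.y := rfl
@[simp] lemma inv_A (g : Engel) : g⁻¹.A = -g.A := rfl
@[simp] lemma inv_B (g : Engel) : g⁻¹.B = -g.B + g.y * g.A := rfl

instance : Group Engel where
  mul_assoc a b c := by ext <;> simp <;> ring
  one_mul a := by ext <;> simp
  mul_one a := by ext <;> simp
  inv_mul_cancel a := by
    ext <;>
      simp only [mul_x, mul_y, mul_A, mul_B, inv_x, inv_y, inv_A, inv_B,
        one_x, one_y, one_A, one_B] <;> ring

/-- `a^t`: the straight segment from `(0,0)` to `(t,t)`. -/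
def aPow (t : ℝ) : Engel := ⟨t, t, 0, 0⟩

/-- `b^t`: the straight segment from `(0,0)` to `(t,-t)`. -/
def bPow (t : ℝ) : Engel := ⟨t, -t, 0, 0⟩

end Engel

namespace Engel

/-- An ℝ-word over `X = {a, b}` is a finite sequence of pairs `(xᵢ, tᵢ)` with
`xᵢ ∈ {a, b}` (encoded as `Bool`: `true ↦ a`, `false ↦ b`) and `tᵢ ∈ ℝ`.
Its evaluation is the product `x₁^{t₁}·…·x_k^{t_k}` in `Ē`. -/
def wordEval (w : List (Bool × ℝ)) : Engel :=
  (w.map fun p => if p.1 then aPow p.2 else bPow p.2).prod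

/-- The length `ℓ(w) = Σᵢ |tᵢ|` of an ℝ-word. -/
def wordLen (w : List (Bool × ℝ)) : ℝ := (w.map fun p => |p.2|).sum

end Engel

/-!
Read an ℝ-word as the polygonal path whose `i`-th edge moves `tᵢ` to the right and `±tᵢ` up.
Then `6 B(w̄) = x y² - Σᵢ tᵢ (yᵢ² + yᵢ yᵢ₊₁ + yᵢ₊₁²)` with `yᵢ` the heights of the vertices, so
for a path returning to the axis `-6 B(w̄)` is the sum of the edge weights `±|yᵢ₊₁³ - yᵢ³|`:
positive on the `p` forward edges (`tᵢ > 0`), negative on the backward ones, whose total length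
is `δ = Δ / 2`.

A forward edge of length `t` has weight at least `t³ / 4`, and about `t³` if it starts or ends
near the axis, as the first and last forward edges do (up to `δ`). Tangent-line bounds turn this
into `n³ / (4 (p - 1)²)`, the main term, with a slack of order `(n / k)³` as soon as there is a
backward edge, since then `p ≤ k - 1`. Backward edges at height at most `c` cost at most
`3 c² δ`. For `c = O(n / k)` this is paid by the slack, or by `Δ² n / k` when `δ` is not small.
For larger `c` the forward edges have to climb above `c / 2` and back; cutting every edge at the
heights `±c / 2` shows that this climb earns about `c³` on top of the main term. When `δ ≥ n`
everything is absorbed by `Δ³`.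
-/

namespace Engel

open Finset

/-- The contribution `t (a² + ab + b²) = ±(b³ - a³)` of an edge from height `a` to height `b`. -/
def weight (t y : ℕ → ℝ) (i : ℕ) : ℝ := t i * (y i ^ 2 + y i * y (i + 1) + y (i + 1) ^ 2)

def letter (p : Bool × ℝ) : Engel := if p.1 then aPow p.2 else bPow p.2

lemma wordEval_take_succ (w : List (Bool × ℝ)) {i : ℕ} (hi : i < w.length) :
    wordEval (w.take (i + 1)) = wordEval (w.take i) * letter (w.getD i default) := by
  simp only [wordEval]
  rw [List.map_take, List.map_take, List.prod_take_succ _ _ (by simpa using hi),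
    List.getElem_map, List.getD_eq_getElem _ _ hi]
  rfl

lemma wordLen_take_succ (w : List (Bool × ℝ)) {i : ℕ} (hi : i < w.length) :
    wordLen (w.take (i + 1)) = wordLen (w.take i) + |(w.getD i default).2| := by
  simp only [wordLen]
  rw [List.map_take, List.map_take, List.sum_take_succ _ _ (by simpa using hi),
    List.getElem_map, List.getD_eq_getElem _ _ hi]

def exponent (w : List (Bool × ℝ)) (i : ℕ) : ℝ := (w.getD i default).2

def height (w : List (Bool × ℝ)) (m : ℕ) : ℝ := (wordEval (w.take m)).y

lemma abs_height_succ_sub (w : List (Bool × ℝ)) {i : ℕ} (hi : i < w.length) :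
    |height w (i + 1) - height w i| = |exponent w i| := by
  rw [height, height, wordEval_take_succ w hi, exponent]
  unfold letter
  split_ifs <;> simp [aPow, bPow]

lemma wordEval_take_x (w : List (Bool × ℝ)) {m : ℕ} (hm : m ≤ w.length) :
    (wordEval (w.take m)).x = ∑ i ∈ range m, exponent w i := by
  induction m with
  | zero => simp [wordEval]
  | succ m ih =>
    rw [wordEval_take_succ w hm, mul_x, ih (by omega), sum_range_succ, exponent]
    unfold letter
    split_ifs <;> rfl

lemma wordLen_eq_sum (w : List (Bool × ℝ)) :
    wordLen w = ∑ i ∈ range w.length, |exponent w i| := by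
  suffices ∀ m ≤ w.length, wordLen (w.take m) = ∑ i ∈ range m, |exponent w i| by
    simpa using this w.length le_rfl
  intro m hm
  induction m with
  | zero => simp [wordLen]
  | succ m ih => rw [wordLen_take_succ w hm, ih (by omega), sum_range_succ, exponent]

lemma six_mul_wordEval_take_B (w : List (Bool × ℝ)) {m : ℕ} (hm : m ≤ w.length) :
    6 * (wordEval (w.take m)).B = (wordEval (w.take m)).x * height w m ^ 2
      - ∑ i ∈ range m, weight (exponent w) (height w) i := by
  induction m with
  | zero => simp [wordEval, height]
  | succ m ih =>
    have hm' : m < w.length := hm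
    have key := ih hm'.le
    simp only [weight, height] at key ⊢
    rw [sum_range_succ, wordEval_take_succ w hm', exponent]
    unfold letter
    split_ifs <;> simp only [mul_x, mul_y, mul_B, aPow, bPow] <;> linear_combination key

section RealInequalities

variable {a b c t q δ : ℝ}

lemma tangent_le_cube (ht : 0 ≤ t) (hq : 0 ≤ q) : 3 * q ^ 2 * t - 2 * q ^ 3 ≤ t ^ 3 := by
  nlinarith [mul_nonneg (sq_nonneg (t - q)) ht, mul_nonneg (sq_nonneg (t - q)) hq]

lemma sub_cube_div_four_le (hab : a ≤ b) : (b - a) ^ 3 / 4 ≤ b ^ 3 - a ^ 3 := by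
  nlinarith [mul_nonneg (sub_nonneg.2 hab) (sq_nonneg (a + b))]

lemma quad_nonneg (a b : ℝ) : 0 ≤ a ^ 2 + a * b + b ^ 2 := by
  nlinarith [sq_nonneg (a + b), sq_nonneg (a - b)]

lemma quad_le_three_mul_sq (ha : |a| ≤ c) (hb : |b| ≤ c) : a ^ 2 + a * b + b ^ 2 ≤ 3 * c ^ 2 := by
  have hab : a * b ≤ c ^ 2 := by
    have := abs_mul a b ▸ mul_le_mul ha hb (abs_nonneg _) ((abs_nonneg _).trans ha)
    nlinarith [le_abs_self (a * b)]
  nlinarith [sq_abs a, sq_abs b, mul_self_le_mul_self (abs_nonneg a) ha,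
    mul_self_le_mul_self (abs_nonneg b) hb]

/-- Since `a² + ab + b² ≥ t² / 4`, this is the tangent line of `t³ / 4` at `t = 2q`. -/
lemma tangent_le_edge (ht : 0 ≤ t) (hq : 0 ≤ q) (hab : (b - a) ^ 2 = t ^ 2) :
    3 * q ^ 2 * t - 4 * q ^ 3 ≤ t * (a ^ 2 + a * b + b ^ 2) := by
  have h1 : t ^ 3 / 4 ≤ t * (a ^ 2 + a * b + b ^ 2) := by
    nlinarith [mul_nonneg ht (sq_nonneg (a + b))]
  nlinarith [tangent_le_cube ht (by linarith : (0 : ℝ) ≤ 2 * q)]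

/-- Here `a² + ab + b² ≥ t² - 3δt`, and the bound is the tangent line of `(t - 3δ)³` at
`t - 3δ = q`. -/
lemma tangent_le_edge_of_abs_le (ht : 0 < t) (hq : 0 ≤ q) (hδ : 0 ≤ δ)
    (hab : (b - a) ^ 2 = t ^ 2) (ha : |a| ≤ δ) :
    3 * q ^ 2 * t - 9 * δ * q ^ 2 - 2 * q ^ 3 ≤ t * (a ^ 2 + a * b + b ^ 2) := by
  have hP : t ^ 2 - 3 * δ * t ≤ a ^ 2 + a * b + b ^ 2 := by
    have h0 : (b - a - t) * (b - a + t) = 0 := by linear_combination hab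
    obtain ⟨ha₁, ha₂⟩ := abs_le.1 ha
    rcases mul_eq_zero.1 h0 with h | h <;> nlinarith [sq_nonneg a]
  set m := max (t - 3 * δ) 0
  have hm : m ^ 3 ≤ t * (a ^ 2 + a * b + b ^ 2) := by
    rcases le_total t (3 * δ) with h | h
    · rw [show m = 0 from max_eq_right (by linarith)]
      simpa using mul_nonneg ht.le (quad_nonneg a b)
    · rw [show m = t - 3 * δ from max_eq_left (by linarith)]
      nlinarith [mul_le_mul_of_nonneg_left hP ht.le,
        mul_nonneg hδ (mul_nonneg (by linarith : (0 : ℝ) ≤ 2 * t - 3 * δ)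
          (by linarith : (0 : ℝ) ≤ t - 3 * δ))]
  have := tangent_le_cube (le_max_right (t - 3 * δ) 0) hq
  nlinarith [mul_le_mul_of_nonneg_left (le_max_left (t - 3 * δ) 0)
    (by positivity : (0 : ℝ) ≤ 3 * q ^ 2)]

lemma abs_sub_mul_quad (a b : ℝ) : |b - a| * (a ^ 2 + a * b + b ^ 2) = |b ^ 3 - a ^ 3| := by
  rw [show b ^ 3 - a ^ 3 = (b - a) * (a ^ 2 + a * b + b ^ 2) by ring, abs_mul,
    abs_of_nonneg (quad_nonneg a b)]

lemma abs_sub_cube_div_four_le (a b : ℝ) : |b - a| ^ 3 / 4 ≤ |b ^ 3 - a ^ 3| := by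
  have h : |b - a| ^ 3 = |b - a| * (b - a) ^ 2 := by rw [← sq_abs (b - a)]; ring
  rw [← abs_sub_mul_quad, h]
  nlinarith [mul_nonneg (abs_nonneg (b - a)) (sq_nonneg (a + b))]

end RealInequalities

lemma abs_sub_le_sum_Ico (f : ℕ → ℝ) {m n : ℕ} (hmn : m ≤ n) :
    |f n - f m| ≤ ∑ i ∈ Ico m n, |f (i + 1) - f i| :=
  sum_Ico_sub f hmn ▸ abs_sum_le_sum_abs _ _

lemma two_mul_abs_le_sum_range (f : ℕ → ℝ) {k j : ℕ} (h0 : f 0 = 0) (hk : f k = 0)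
    (hj : j ≤ k) : 2 * |f j| ≤ ∑ i ∈ range k, |f (i + 1) - f i| := by
  have h1 := abs_sub_le_sum_Ico f (Nat.zero_le j)
  have h2 := abs_sub_le_sum_Ico f hj
  rw [h0, sub_zero] at h1
  rw [hk, zero_sub, abs_neg] at h2
  rw [range_eq_Ico, ← sum_Ico_consecutive _ (Nat.zero_le j) hj]
  linarith

/-- Heights `y` of a polygonal path from the `x`-axis back to it whose `i`-th edge has
horizontal displacement `t i` and slope `±1`. -/
structure IsDiagonalPath (k : ℕ) (t y : ℕ → ℝ) : Prop where
  start : y 0 = 0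
  finish : y k = 0
  abs_step : ∀ i < k, |y (i + 1) - y i| = |t i|

def forwardEdges (k : ℕ) (t : ℕ → ℝ) : Finset ℕ := (range k).filter (0 < t ·)

def backwardEdges (k : ℕ) (t : ℕ → ℝ) : Finset ℕ := (range k).filter (t · < 0)

def forwardLength (k : ℕ) (t : ℕ → ℝ) : ℝ := ∑ i ∈ forwardEdges k t, t i

def backtrack (k : ℕ) (t : ℕ → ℝ) : ℝ := ∑ i ∈ backwardEdges k t, -t i

section Edges

variable {k : ℕ} {t : ℕ → ℝ}

lemma mem_forwardEdges {i : ℕ} : i ∈ forwardEdges k t ↔ i < k ∧ 0 < t i := by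
  simp [forwardEdges]

lemma mem_backwardEdges {i : ℕ} : i ∈ backwardEdges k t ↔ i < k ∧ t i < 0 := by
  simp [backwardEdges]

lemma sum_range_eq_forward_add_backward (f : ℕ → ℝ) (hf : ∀ i < k, t i = 0 → f i = 0) :
    ∑ i ∈ range k, f i = ∑ i ∈ forwardEdges k t, f i + ∑ i ∈ backwardEdges k t, f i := by
  rw [← sum_filter_add_sum_filter_not (range k) (0 < t ·), forwardEdges]
  congr 1
  refine (sum_subset (fun i hi => ?_) fun i hi hi' => ?_).symm
  · simp only [mem_filter, mem_backwardEdges, mem_range] at hi ⊢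
    exact ⟨hi.1, not_lt.2 hi.2.le⟩
  · simp only [mem_filter, mem_backwardEdges, mem_range, not_lt, not_and] at hi hi'
    exact hf i hi.1 (le_antisymm hi.2 (hi' hi.1))

lemma sum_eq_forwardLength_sub_backtrack :
    ∑ i ∈ range k, t i = forwardLength k t - backtrack k t := by
  rw [sum_range_eq_forward_add_backward t fun _ _ h => h, forwardLength, backtrack,
    sum_neg_distrib, sub_neg_eq_add]

lemma sum_abs_eq_forwardLength_add_backtrack :
    ∑ i ∈ range k, |t i| = forwardLength k t + backtrack k t := by
  rw [sum_range_eq_forward_add_backward (t := t) (|t ·|) fun _ _ h => by simp [h]]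
  congr 1
  · exact sum_congr rfl fun i hi => abs_of_pos (mem_forwardEdges.1 hi).2
  · exact sum_congr rfl fun i hi => abs_of_neg (mem_backwardEdges.1 hi).2

lemma backtrack_nonneg : 0 ≤ backtrack k t :=
  sum_nonneg fun _ hi => neg_nonneg.2 (mem_backwardEdges.1 hi).2.le

lemma sum_abs_le_backtrack {s : Finset ℕ} (hs : s ⊆ range k) (hst : ∀ i ∈ s, t i ≤ 0) :
    ∑ i ∈ s, |t i| ≤ backtrack k t := by
  rw [← sum_filter_of_ne (p := (t · < 0)) fun i hi h =>
    lt_of_le_of_ne (hst i hi) fun h0 => h (by rw [h0, abs_zero])]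
  calc ∑ i ∈ s with t i < 0, |t i| ≤ ∑ i ∈ backwardEdges k t, |t i| :=
        sum_le_sum_of_subset_of_nonneg (filter_subset_filter _ hs) fun _ _ _ => abs_nonneg _
    _ = backtrack k t := sum_congr rfl fun i hi => abs_of_neg (mem_backwardEdges.1 hi).2

lemma card_forwardEdges_add_card_backwardEdges_le :
    #(forwardEdges k t) + #(backwardEdges k t) ≤ k := by
  rw [← card_union_of_disjoint]
  · exact (card_le_card (union_subset (filter_subset _ _) (filter_subset _ _))).trans
      (card_range k).le
  · exact disjoint_left.2 fun _ h1 h2 =>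
      (mem_forwardEdges.1 h1).2.not_gt (mem_backwardEdges.1 h2).2

end Edges

section Weights

variable {k : ℕ} {t y : ℕ → ℝ}

lemma weight_nonneg_of_mem_forwardEdges {i : ℕ} (hi : i ∈ forwardEdges k t) :
    0 ≤ weight t y i :=
  mul_nonneg (mem_forwardEdges.1 hi).2.le (quad_nonneg _ _)

lemma sum_range_weight_eq_forward_add_backward :
    ∑ i ∈ range k, weight t y i =
      ∑ i ∈ forwardEdges k t, weight t y i + ∑ i ∈ backwardEdges k t, weight t y i :=
  sum_range_eq_forward_add_backward _ fun i _ h => by simp [weight, h]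

lemma neg_three_mul_sq_mul_backtrack_le {c : ℝ}
    (hc : ∀ i ∈ backwardEdges k t, |y i| ≤ c ∧ |y (i + 1)| ≤ c) :
    -(3 * c ^ 2 * backtrack k t) ≤ ∑ i ∈ backwardEdges k t, weight t y i := by
  rw [backtrack, mul_sum, ← sum_neg_distrib]
  refine sum_le_sum fun i hi => ?_
  have := mul_le_mul_of_nonpos_left (quad_le_three_mul_sq (hc i hi).1 (hc i hi).2)
    (mem_backwardEdges.1 hi).2.le
  rw [weight]
  linarith

end Weights

namespace IsDiagonalPath

variable {k : ℕ} {t y : ℕ → ℝ}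

lemma sq_step (hp : IsDiagonalPath k t y) {i : ℕ} (hi : i < k) :
    (y (i + 1) - y i) ^ 2 = t i ^ 2 := by
  rw [← sq_abs, hp.abs_step i hi, sq_abs]

lemma abs_sub_le_sum_abs (hp : IsDiagonalPath k t y) {m n : ℕ} (hmn : m ≤ n) (hn : n ≤ k) :
    |y n - y m| ≤ ∑ i ∈ Ico m n, |t i| :=
  (abs_sub_le_sum_Ico y hmn).trans_eq <|
    sum_congr rfl fun i hi => hp.abs_step i ((mem_Ico.1 hi).2.trans_le hn)

lemma two_mul_abs_le_sum_abs (hp : IsDiagonalPath k t y) {m : ℕ} (hm : m ≤ k) :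
    2 * |y m| ≤ ∑ i ∈ range k, |t i| :=
  (two_mul_abs_le_sum_range y hp.start hp.finish hm).trans_eq <|
    sum_congr rfl fun i hi => hp.abs_step i (mem_range.1 hi)

lemma abs_le_backtrack_of_nonpos_before (hp : IsDiagonalPath k t y) {m : ℕ} (hm : m ≤ k)
    (h : ∀ i < m, t i ≤ 0) : |y m| ≤ backtrack k t := by
  have := hp.abs_sub_le_sum_abs (Nat.zero_le m) hm
  rw [hp.start, sub_zero] at this
  exact this.trans <| sum_abs_le_backtrack (fun i hi => mem_range.2 ((mem_Ico.1 hi).2.trans_le hm))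
    fun i hi => h i (mem_Ico.1 hi).2

lemma abs_le_backtrack_of_nonpos_after (hp : IsDiagonalPath k t y) {m : ℕ} (hm : m ≤ k)
    (h : ∀ i, m ≤ i → i < k → t i ≤ 0) : |y m| ≤ backtrack k t := by
  have := hp.abs_sub_le_sum_abs hm le_rfl
  rw [hp.finish, zero_sub, abs_neg] at this
  exact this.trans <| sum_abs_le_backtrack (fun i hi => mem_range.2 (mem_Ico.1 hi).2)
    fun i hi => h i (mem_Ico.1 hi).1 (mem_Ico.1 hi).2

lemma abs_le_backtrack_at_forward_ends (hp : IsDiagonalPath k t y)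
    (hne : (forwardEdges k t).Nonempty) :
    |y ((forwardEdges k t).min' hne)| ≤ backtrack k t ∧
      |y ((forwardEdges k t).max' hne + 1)| ≤ backtrack k t := by
  have ha := (mem_forwardEdges.1 ((forwardEdges k t).min'_mem hne)).1
  have hz := (mem_forwardEdges.1 ((forwardEdges k t).max'_mem hne)).1
  refine ⟨hp.abs_le_backtrack_of_nonpos_before ha.le fun i hi => ?_,
    hp.abs_le_backtrack_of_nonpos_after hz fun i hi hik => ?_⟩
  · by_contra! hti
    have := (forwardEdges k t).min'_le i (mem_forwardEdges.2 ⟨hi.trans ha, hti⟩)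
    omega
  · by_contra! hti
    have := (forwardEdges k t).le_max' i (mem_forwardEdges.2 ⟨hik, hti⟩)
    omega

lemma two_le_card_forwardEdges (hp : IsDiagonalPath k t y)
    (hδ : backtrack k t < ∑ i ∈ range k, t i) : 2 ≤ #(forwardEdges k t) := by
  rw [sum_eq_forwardLength_sub_backtrack] at hδ
  have hne : (forwardEdges k t).Nonempty := by
    by_contra h
    simp only [forwardLength, not_nonempty_iff_eq_empty.1 h, sum_empty] at hδ
    linarith [backtrack_nonneg (k := k) (t := t)]
  by_contra! h1
  obtain ⟨a, ha⟩ := card_eq_one.1 (show #(forwardEdges k t) = 1 by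
    have := card_pos.2 hne; omega)
  have haF := mem_forwardEdges.1 (ha ▸ mem_singleton_self a)
  have hends := hp.abs_le_backtrack_at_forward_ends hne
  rw [show (forwardEdges k t).min' hne = a by simp [ha],
    show (forwardEdges k t).max' hne = a by simp [ha]] at hends
  have hta : t a = forwardLength k t := by rw [forwardLength, ha, sum_singleton]
  have hstep := hp.abs_step a haF.1
  rw [abs_of_pos haF.2] at hstep
  linarith [abs_sub (y (a + 1)) (y a), hends.1, hends.2]

/-- With `q = n / (2 (p - 1))` this is the sharp bound `n³ / (4 (p - 1)²)` for `p` forward edges;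
it uses that the first forward edge starts, and the last one ends, near the axis. -/
lemma tangent_le_sum_forward_weight (hp : IsDiagonalPath k t y)
    (h2 : 2 ≤ #(forwardEdges k t)) {q : ℝ} (hq : 0 ≤ q) :
    3 * q ^ 2 * forwardLength k t - 18 * backtrack k t * q ^ 2
        - 4 * q ^ 3 * ((#(forwardEdges k t) : ℝ) - 1)
      ≤ ∑ i ∈ forwardEdges k t, weight t y i := by
  have hne : (forwardEdges k t).Nonempty := card_pos.1 (by omega)
  obtain ⟨hya, hyz⟩ := hp.abs_le_backtrack_at_forward_ends hne
  set F := forwardEdges k t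
  have haz : F.min' hne ≠ F.max' hne := (F.min'_lt_max'_of_card h2).ne
  have ha := mem_forwardEdges.1 (F.min'_mem hne)
  have hz := mem_forwardEdges.1 (F.max'_mem hne)
  set g : ℕ → ℝ := fun i => weight t y i - (3 * q ^ 2 * t i - 4 * q ^ 3)
  have hg : ∀ i ∈ F, 0 ≤ g i := fun i hi => by
    have hi := mem_forwardEdges.1 hi
    simpa [g, weight] using tangent_le_edge hi.2.le hq (hp.sq_step hi.1)
  have hga : 2 * q ^ 3 - 9 * backtrack k t * q ^ 2 ≤ g (F.min' hne) := by
    have := tangent_le_edge_of_abs_le ha.2 hq backtrack_nonneg (hp.sq_step ha.1) hya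
    simp only [g, weight]
    linarith
  have hgz : 2 * q ^ 3 - 9 * backtrack k t * q ^ 2 ≤ g (F.max' hne) := by
    have := tangent_le_edge_of_abs_le (b := y (F.max' hne)) hz.2 hq backtrack_nonneg
      (by linear_combination hp.sq_step hz.1) hyz
    simp only [g, weight]
    linarith
  have hpair : g (F.min' hne) + g (F.max' hne) ≤ ∑ i ∈ F, g i := by
    rw [← sum_pair haz]
    exact sum_le_sum_of_subset_of_nonneg
      (insert_subset (F.min'_mem hne) (singleton_subset_iff.2 (F.max'_mem hne)))
      fun i hi _ => hg i hi
  have hsum : ∑ i ∈ F, g i =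
      ∑ i ∈ F, weight t y i - (3 * q ^ 2 * forwardLength k t - 4 * q ^ 3 * #F) := by
    simp only [g, sum_sub_distrib, ← mul_sum, sum_const, nsmul_eq_mul, forwardLength, F]
    ring
  linarith

end IsDiagonalPath

def clip (θ u : ℝ) : ℝ := max (-θ) (min θ u)

/-- `u³ - clip θ u ³ = ∫ 3 s² ds` over the part of `[0, u]` outside `[-θ, θ]`. -/
def cubeExcess (θ u : ℝ) : ℝ := u ^ 3 - clip θ u ^ 3

section Clip

variable {θ u v : ℝ}

lemma clip_cases (hθ : 0 ≤ θ) (u : ℝ) :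
    (u ≤ -θ ∧ clip θ u = -θ) ∨ (-θ ≤ u ∧ u ≤ θ ∧ clip θ u = u) ∨ (θ ≤ u ∧ clip θ u = θ) := by
  rcases le_total u (-θ) with h | h
  · exact Or.inl ⟨h, by rw [clip, min_eq_right (by linarith), max_eq_left h]⟩
  rcases le_total u θ with h' | h'
  · exact Or.inr (Or.inl ⟨h, h', by rw [clip, min_eq_right h', max_eq_right h]⟩)
  · exact Or.inr (Or.inr ⟨h', by rw [clip, min_eq_left h', max_eq_right (by linarith)]⟩)

lemma clip_le_clip (huv : u ≤ v) : clip θ u ≤ clip θ v :=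
  max_le_max le_rfl (min_le_min le_rfl huv)

lemma clip_sub_clip_le (hθ : 0 ≤ θ) (huv : u ≤ v) : clip θ v - clip θ u ≤ v - u := by
  rcases clip_cases hθ u with ⟨_, hu⟩ | ⟨_, _, hu⟩ | ⟨_, hu⟩ <;>
    rcases clip_cases hθ v with ⟨_, hv⟩ | ⟨_, _, hv⟩ | ⟨_, hv⟩ <;> linarith

/-- `cubeExcess θ u - 3 θ² (u - clip θ u)` is monotone: it vanishes on `[-θ, θ]` and equals
`(u ∓ θ)² (u ± 2θ)` outside. -/
lemma three_mul_sq_mul_le_cubeExcess_sub (hθ : 0 ≤ θ) (huv : u ≤ v) :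
    3 * θ ^ 2 * ((v - clip θ v) - (u - clip θ u)) ≤ cubeExcess θ v - cubeExcess θ u := by
  have hw : 0 ≤ v - u := by linarith
  simp only [cubeExcess]
  rcases le_or_gt v (-θ) with hv | hv
  · have hfac : 0 ≤ u ^ 2 + u * v + v ^ 2 - 3 * θ ^ 2 := by
      nlinarith [mul_nonneg (by linarith : (0 : ℝ) ≤ -θ - u) (by linarith : (0 : ℝ) ≤ -θ - v)]
    rw [show clip θ u = -θ by rw [clip, min_eq_right (by linarith), max_eq_left (by linarith)],
      show clip θ v = -θ by rw [clip, min_eq_right (by linarith), max_eq_left hv]]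
    nlinarith [mul_nonneg hw hfac]
  rcases le_or_gt θ u with hu | hu
  · have hfac : 0 ≤ u ^ 2 + u * v + v ^ 2 - 3 * θ ^ 2 := by
      nlinarith [mul_nonneg (by linarith : (0 : ℝ) ≤ u - θ) (by linarith : (0 : ℝ) ≤ v - θ)]
    rw [show clip θ u = θ by rw [clip, min_eq_left hu, max_eq_right (by linarith)],
      show clip θ v = θ by rw [clip, min_eq_left (by linarith), max_eq_right (by linarith)]]
    nlinarith [mul_nonneg hw hfac]
  have hFu : u ^ 3 - clip θ u ^ 3 - 3 * θ ^ 2 * (u - clip θ u) ≤ 0 := by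
    rcases clip_cases hθ u with ⟨h, e⟩ | ⟨-, -, e⟩ | ⟨h, e⟩ <;> rw [e]
    · nlinarith [mul_nonneg (sq_nonneg (u + θ)) (by linarith : (0 : ℝ) ≤ 2 * θ - u)]
    · simp
    · nlinarith
  have hFv : 0 ≤ v ^ 3 - clip θ v ^ 3 - 3 * θ ^ 2 * (v - clip θ v) := by
    rcases clip_cases hθ v with ⟨h, e⟩ | ⟨-, -, e⟩ | ⟨h, e⟩ <;> rw [e]
    · nlinarith
    · simp
    · nlinarith [mul_nonneg (sq_nonneg (v - θ)) (by linarith : (0 : ℝ) ≤ v + 2 * θ)]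
  linarith

lemma cubeExcess_neg (hθ : 0 ≤ θ) (u : ℝ) : cubeExcess θ (-u) = -cubeExcess θ u := by
  have : clip θ (-u) = -clip θ u := by
    rcases clip_cases hθ u with ⟨h, hu⟩ | ⟨h, h', hu⟩ | ⟨h, hu⟩ <;>
      rcases clip_cases hθ (-u) with ⟨h2, hv⟩ | ⟨h2, h2', hv⟩ | ⟨h2, hv⟩ <;>
      rw [hu, hv] <;> linarith
  rw [cubeExcess, cubeExcess, this]
  ring

lemma cubeExcess_of_le (hθ : 0 ≤ θ) (hθu : θ ≤ u) : cubeExcess θ u = u ^ 3 - θ ^ 3 := by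
  rw [cubeExcess, clip, min_eq_left hθu, max_eq_right (by linarith)]

lemma cubeExcess_zero (hθ : 0 ≤ θ) : cubeExcess θ 0 = 0 := by
  rw [cubeExcess, clip, min_eq_right hθ, max_eq_right (by linarith)]
  ring

lemma abs_cubeExcess_of_le_abs {θ u : ℝ} (hθ : 0 ≤ θ) (h : θ ≤ |u|) :
    |cubeExcess θ u| = |u| ^ 3 - θ ^ 3 := by
  have key : ∀ v, θ ≤ v → |cubeExcess θ v| = v ^ 3 - θ ^ 3 := fun v hv => by
    rw [cubeExcess_of_le hθ hv, abs_of_nonneg (sub_nonneg.2 (pow_le_pow_left₀ hθ hv 3))]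
  rcases le_total 0 u with hu | hu
  · rw [abs_of_nonneg hu] at h ⊢
    exact key u h
  · rw [abs_of_nonpos hu] at h ⊢
    rw [← key (-u) h, cubeExcess_neg hθ, abs_neg]

end Clip

/-- Splitting `∫ 3 s² ds` and the length of the interval between `a` and `b` into the parts
inside and outside `[-θ, θ]`. -/
lemma clip_decomposition {θ : ℝ} (hθ : 0 ≤ θ) (a b : ℝ) :
    |b ^ 3 - a ^ 3| = |clip θ b ^ 3 - clip θ a ^ 3| + |cubeExcess θ b - cubeExcess θ a| ∧
    |b - a| = |clip θ b - clip θ a| + |(b - clip θ b) - (a - clip θ a)| ∧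
    3 * θ ^ 2 * |(b - clip θ b) - (a - clip θ a)| ≤ |cubeExcess θ b - cubeExcess θ a| := by
  wlog hab : a ≤ b generalizing a b
  · obtain ⟨h1, h2, h3⟩ := this b a (le_of_not_ge hab)
    refine ⟨?_, ?_, ?_⟩
    · rwa [abs_sub_comm (b ^ 3), abs_sub_comm (clip θ b ^ 3), abs_sub_comm (cubeExcess θ b)]
    · rwa [abs_sub_comm b, abs_sub_comm (clip θ b), abs_sub_comm (b - clip θ b)]
    · rwa [abs_sub_comm (b - clip θ b), abs_sub_comm (cubeExcess θ b)]
  have hclip := clip_le_clip (θ := θ) hab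
  have hlen := clip_sub_clip_le hθ hab
  have hexc := three_mul_sq_mul_le_cubeExcess_sub hθ hab
  have hcube : ∀ {u v : ℝ}, u ≤ v → 0 ≤ v ^ 3 - u ^ 3 := fun h =>
    (div_nonneg (pow_nonneg (sub_nonneg.2 h) 3) zero_le_four).trans (sub_cube_div_four_le h)
  have hexc0 : 0 ≤ cubeExcess θ b - cubeExcess θ a :=
    (mul_nonneg (by positivity) (by linarith)).trans hexc
  rw [abs_of_nonneg (hcube hab), abs_of_nonneg (hcube hclip), abs_of_nonneg hexc0,
    abs_of_nonneg (by linarith), abs_of_nonneg (by linarith), abs_of_nonneg (by linarith)]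
  exact ⟨by rw [cubeExcess, cubeExcess]; ring, by ring, hexc⟩

/-- Length of the `i`-th edge's vertical range lying outside `[-θ, θ]`. -/
def excessLength (θ : ℝ) (y : ℕ → ℝ) (i : ℕ) : ℝ :=
  |(y (i + 1) - clip θ (y (i + 1))) - (y i - clip θ (y i))|

def excessCube (θ : ℝ) (y : ℕ → ℝ) (i : ℕ) : ℝ :=
  |cubeExcess θ (y (i + 1)) - cubeExcess θ (y i)|

namespace IsDiagonalPath

variable {k : ℕ} {t y : ℕ → ℝ} {θ : ℝ}

lemma abs_weight (hp : IsDiagonalPath k t y) {i : ℕ} (hi : i < k) :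
    |weight t y i| = |y (i + 1) ^ 3 - y i ^ 3| := by
  rw [weight, abs_mul, ← hp.abs_step i hi, abs_of_nonneg (quad_nonneg _ _), abs_sub_mul_quad]

/-- On a forward edge the part inside `[-θ, θ]` is bounded through the tangent line of
`ℓ³ / 4` at `ℓ = 2θ'`; the part outside is kept. -/
lemma tangent_add_excessCube_le_weight (hp : IsDiagonalPath k t y) (hθ : 0 ≤ θ) {i : ℕ}
    (hi : i ∈ forwardEdges k t) {θ' : ℝ} (hθ' : 0 ≤ θ') :
    (3 * θ' ^ 2 * (t i - excessLength θ y i) - 2 * θ' ^ 3) / 4 + excessCube θ y i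
      ≤ weight t y i := by
  obtain ⟨hik, hti⟩ := mem_forwardEdges.1 hi
  obtain ⟨hcube, hlen, -⟩ := clip_decomposition hθ (y i) (y (i + 1))
  have hw := hp.abs_weight hik
  rw [abs_of_nonneg (weight_nonneg_of_mem_forwardEdges hi)] at hw
  rw [hp.abs_step i hik, abs_of_pos hti] at hlen
  have h1 := abs_sub_cube_div_four_le (clip θ (y i)) (clip θ (y (i + 1)))
  have h2 := tangent_le_cube (abs_nonneg (clip θ (y (i + 1)) - clip θ (y i))) hθ'
  rw [excessLength, excessCube, hlen, add_sub_cancel_right]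
  linarith

lemma excessCube_le_neg_weight (hp : IsDiagonalPath k t y) (hθ : 0 ≤ θ) {i : ℕ}
    (hi : i ∈ backwardEdges k t) : excessCube θ y i ≤ -weight t y i := by
  obtain ⟨hik, hti⟩ := mem_backwardEdges.1 hi
  obtain ⟨hcube, -, -⟩ := clip_decomposition hθ (y i) (y (i + 1))
  have hw := hp.abs_weight hik
  rw [abs_of_nonpos (show weight t y i ≤ 0 from
    mul_nonpos_of_nonpos_of_nonneg hti.le (quad_nonneg _ _))] at hw
  rw [excessCube]
  linarith [abs_nonneg (clip θ (y (i + 1)) ^ 3 - clip θ (y i) ^ 3)]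

/-- If the backward edges stay within height `c` but the path reaches height `c`, the forward
edges pay for climbing above `c / 2` twice. `G` is the length the forward edges spend above
`c / 2` and `D` their cubic contribution there. -/
lemma exists_high_peak_bound (hp : IsDiagonalPath k t y) {c : ℝ} (hc : 0 ≤ c)
    (hback : ∀ i ∈ backwardEdges k t, |y i| ≤ c ∧ |y (i + 1)| ≤ c)
    {j : ℕ} (hj : j ≤ k) (hyj : |y j| = c) :
    ∃ G D : ℝ, 0 ≤ G ∧ 3 / 4 * c ^ 2 * G ≤ D ∧ 7 / 4 * c ^ 3 - 3 * c ^ 2 * backtrack k t ≤ D ∧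
      ∀ θ' : ℝ, 0 ≤ θ' →
        (3 * θ' ^ 2 * (forwardLength k t - G) - 2 * θ' ^ 3 * #(forwardEdges k t)) / 4 + D
          - 3 * c ^ 2 * backtrack k t ≤ ∑ i ∈ range k, weight t y i := by
  have hθ : 0 ≤ c / 2 := by positivity
  have hbackW := neg_three_mul_sq_mul_backtrack_le hback
  refine ⟨∑ i ∈ forwardEdges k t, excessLength (c / 2) y i,
    ∑ i ∈ forwardEdges k t, excessCube (c / 2) y i,
    sum_nonneg fun _ _ => abs_nonneg _, ?_, ?_, fun θ' hθ' => ?_⟩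
  · rw [mul_sum]
    refine sum_le_sum fun i _ => ?_
    have := (clip_decomposition hθ (y i) (y (i + 1))).2.2
    rw [excessLength, excessCube]
    linarith
  · have htotal : 2 * |cubeExcess (c / 2) (y j)| ≤ ∑ i ∈ range k, excessCube (c / 2) y i :=
      two_mul_abs_le_sum_range (fun m => cubeExcess (c / 2) (y m))
        (by rw [hp.start, cubeExcess_zero hθ]) (by rw [hp.finish, cubeExcess_zero hθ]) hj
    rw [abs_cubeExcess_of_le_abs hθ (by linarith), hyj,
      sum_range_eq_forward_add_backward (t := t) _ fun i hi h0 => by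
        rw [excessCube, show y (i + 1) = y i by
          simpa [h0, sub_eq_zero] using hp.abs_step i hi, sub_self, abs_zero]] at htotal
    have hbackD : ∑ i ∈ backwardEdges k t, excessCube (c / 2) y i
        ≤ -∑ i ∈ backwardEdges k t, weight t y i := by
      rw [← sum_neg_distrib]
      exact sum_le_sum fun i hi => hp.excessCube_le_neg_weight hθ hi
    linarith
  · rw [sum_range_weight_eq_forward_add_backward]
    have hfwd := sum_le_sum fun i (hi : i ∈ forwardEdges k t) =>
      hp.tangent_add_excessCube_le_weight hθ hi hθ'
    rw [sum_add_distrib, ← sum_div, sum_sub_distrib, ← mul_sum, sum_sub_distrib, sum_const,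
      nsmul_eq_mul] at hfwd
    rw [forwardLength]
    linarith

end IsDiagonalPath

/-- Six times the right-hand side of the theorem, with `κ = k(w) - 1` and `Δ = ℓ(w) - n`. -/
def depthBound (κ n Δ : ℝ) : ℝ := n ^ 3 / (4 * κ ^ 2) - 2400 * Δ ^ 2 * max Δ (n / κ)

section Arithmetic

variable {κ n δ c X : ℝ}

lemma depthBound_le_cube_div (hδ : 0 ≤ δ) :
    depthBound κ n (2 * δ) ≤ n ^ 3 / (4 * κ ^ 2) := by
  have : 0 ≤ 2400 * (2 * δ) ^ 2 * max (2 * δ) (n / κ) :=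
    mul_nonneg (by positivity) (le_max_of_le_left (by linarith))
  rw [depthBound]
  linarith

lemma depthBound_le_of_le_backtrack (hκ : 1 ≤ κ) (hn : 0 < n) (hnδ : n ≤ δ)
    (hX : -(3 * ((n + 2 * δ) / 2) ^ 2 * δ) ≤ X) : depthBound κ n (2 * δ) ≤ X := by
  have hδ : 0 < δ := hn.trans_le hnδ
  have h1 : n ^ 3 / (4 * κ ^ 2) ≤ δ ^ 3 / 4 := by
    gcongr
    nlinarith
  have h2 : 3 * ((n + 2 * δ) / 2) ^ 2 * δ ≤ 27 / 4 * δ ^ 3 := by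
    have : (n + 2 * δ) / 2 ≤ 3 / 2 * δ := by linarith
    have := pow_le_pow_left₀ (by positivity) this 2
    nlinarith
  have h3 : 2400 * (2 * δ) ^ 3 ≤ 2400 * (2 * δ) ^ 2 * max (2 * δ) (n / κ) := by
    rw [pow_succ, mul_assoc]
    gcongr
    exact le_max_left _ _
  rw [depthBound]
  nlinarith [pow_pos hδ 3]

lemma depthBound_zero_le {φ : ℝ} (hn : 0 < n) (hφ : 0 < φ) (hφκ : φ ≤ κ)
    (hX : ∀ q : ℝ, 0 ≤ q → 3 * q ^ 2 * n - 4 * q ^ 3 * φ ≤ X) :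
    depthBound κ n (2 * 0) ≤ X := by
  refine (depthBound_le_cube_div le_rfl).trans ?_
  have hq := hX (n / (2 * φ)) (by positivity)
  calc n ^ 3 / (4 * κ ^ 2) ≤ n ^ 3 / (4 * φ ^ 2) := by gcongr
    _ = 3 * (n / (2 * φ)) ^ 2 * n - 4 * (n / (2 * φ)) ^ 3 * φ := by field_simp; ring
    _ ≤ X := hq

/-- `φ + 1 ≤ κ` instead of `φ ≤ κ` leaves the slack `3 q³ / 2`. -/
lemma cube_div_add_le_of_add_one_le {q φ : ℝ} (hq : 0 ≤ q) (hφ : 1 ≤ φ) (hφκ : φ + 1 ≤ κ)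
    (h2qφ : 2 * q * φ = n) : n ^ 3 / (4 * κ ^ 2) + 3 / 2 * q ^ 3 ≤ q ^ 2 * n := by
  have h1 : n ^ 3 / (4 * κ ^ 2) ≤ n ^ 3 / (4 * (φ + 1) ^ 2) := by
    rw [← h2qφ]
    gcongr
  have h2 : n ^ 3 / (4 * (φ + 1) ^ 2) ≤ q ^ 2 * n - 3 / 2 * q ^ 3 := by
    rw [← h2qφ, div_le_iff₀ (by positivity)]
    nlinarith [mul_nonneg (mul_nonneg (pow_nonneg hq 3) (by linarith : (0 : ℝ) ≤ φ - 1))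
      (by linarith : (0 : ℝ) ≤ 5 * φ + 3)]
  linarith

lemma depthBound_le_of_low_peak {φ : ℝ} (hn : 0 < n) (hδ : 0 ≤ δ) (hφ : 1 ≤ φ)
    (hφκ : φ + 1 ≤ κ) (hc : c ^ 2 ≤ 9 / 4 * (n / κ) ^ 2)
    (hX : ∀ q : ℝ, 0 ≤ q →
      3 * q ^ 2 * (n + δ) - 18 * δ * q ^ 2 - 4 * q ^ 3 * φ - 3 * c ^ 2 * δ ≤ X) :
    depthBound κ n (2 * δ) ≤ X := by
  have hκ : 0 < κ := by linarith
  set q := n / (2 * φ) with hq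
  have hq0 : 0 < q := by positivity
  have h2qφ : 2 * q * φ = n := by rw [hq]; field_simp
  have hXq : q ^ 2 * n - 15 * δ * q ^ 2 - 3 * c ^ 2 * δ ≤ X := by
    have := hX q hq0.le
    have e : q ^ 2 * n - 15 * δ * q ^ 2 - 3 * c ^ 2 * δ
        = 3 * q ^ 2 * (n + δ) - 18 * δ * q ^ 2 - 4 * q ^ 3 * φ - 3 * c ^ 2 * δ := by
      linear_combination (2 * q ^ 2) * h2qφ
    linarith
  have hslack := cube_div_add_le_of_add_one_le hq0.le hφ hφκ h2qφ
  have hh : n / κ ≤ 2 * q := by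
    rw [hq, mul_div_assoc', mul_div_mul_left _ _ two_ne_zero]
    gcongr
    linarith
  set M := max (2 * δ) (n / κ)
  have hM : 2 * δ ≤ M := le_max_left _ _
  have hhM : n / κ ≤ M := le_max_right _ _
  have hbound : depthBound κ n (2 * δ) = n ^ 3 / (4 * κ ^ 2) - 9600 * δ ^ 2 * M := by
    rw [depthBound]; ring
  have hδM : 0 ≤ δ ^ 2 * M := mul_nonneg (sq_nonneg δ) (by linarith)
  rw [hbound]
  rcases le_or_gt (28 * δ) q with hδq | hδq
  · have b1 : 15 * δ * q ^ 2 ≤ 15 / 28 * q ^ 3 := by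
      nlinarith [mul_nonneg (sub_nonneg.2 hδq) (sq_nonneg q)]
    have b2 : 3 * c ^ 2 * δ ≤ 27 / 28 * q ^ 3 := by
      have hc9 : c ^ 2 ≤ 9 * q ^ 2 := by nlinarith [div_pos hn hκ]
      nlinarith [mul_nonneg (sub_nonneg.2 hδq) (sq_nonneg q), mul_nonneg hδ (sub_nonneg.2 hc9)]
    linarith
  · have b1 : 15 * δ * q ^ 2 ≤ 5880 * (δ ^ 2 * M) := by
      have : q ^ 2 ≤ 784 * δ ^ 2 := by nlinarith
      nlinarith [mul_le_mul_of_nonneg_left hM (sq_nonneg δ)]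
    have b2 : 3 * c ^ 2 * δ ≤ 378 * (δ ^ 2 * M) := by
      have h1 : (n / κ) ^ 2 ≤ M * (56 * δ) :=
        pow_two (n / κ) ▸ mul_le_mul hhM (by linarith) (div_pos hn hκ).le (by linarith)
      nlinarith [mul_le_mul_of_nonneg_right hc hδ, mul_le_mul_of_nonneg_right h1 hδ]
    nlinarith [pow_pos hq0 3]

/-- Choice of the tangent point: either `S / p` (the optimum without the excess) or a fixed
fraction of the peak height `c`. -/
lemma exists_tangent_bound {S p G : ℝ} (hn : 0 < n) (hnS : n ≤ S) (hp : 1 ≤ p) (hpκ : p ≤ κ)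
    (hG : 0 ≤ G) (hc0 : 0 ≤ c) (hc : 9 / 4 * (n / κ) ^ 2 < c ^ 2) :
    ∃ θ : ℝ, 0 ≤ θ ∧
      n ^ 3 / (4 * κ ^ 2) ≤ (3 * θ ^ 2 * (S - G) - 2 * θ ^ 3 * p) / 4 + 3 / 8 * c ^ 2 * G := by
  have hp0 : 0 < p := by linarith
  have hκ : 0 < κ := by linarith
  have hS : 0 < S := by linarith
  rcases le_or_gt (17 * S) (12 * c * p) with hsub | hsub
  · refine ⟨S / p, by positivity, ?_⟩
    set θ := S / p with hθ
    have e1 : θ * p = S := by rw [hθ]; field_simp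
    have hθc : 17 * θ ≤ 12 * c := by nlinarith [div_pos hS hp0]
    have hθ2 : 3 / 4 * θ ^ 2 ≤ 3 / 8 * c ^ 2 := by nlinarith [div_pos hS hp0]
    have e2 : θ ^ 2 * S / 4 = S ^ 3 / (4 * p ^ 2) := by rw [hθ]; field_simp
    have hmain : n ^ 3 / (4 * κ ^ 2) ≤ θ ^ 2 * S / 4 := by
      rw [e2]
      exact div_le_div₀ (by positivity) (pow_le_pow_left₀ hn.le hnS 3) (by positivity)
        (by nlinarith)
    have e3 : θ ^ 3 * p = θ ^ 2 * S := by rw [← e1]; ring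
    nlinarith [mul_nonneg (sub_nonneg.2 hθ2) hG]
  · refine ⟨12 / 17 * c, by positivity, ?_⟩
    have hc3 : c ^ 3 * p ≤ 17 / 12 * (c ^ 2 * S) := by
      nlinarith [mul_le_mul_of_nonneg_left hsub.le (sq_nonneg c)]
    have hmain : n ^ 3 / (4 * κ ^ 2) ≤ 612 / 4913 * (c ^ 2 * S) := by
      have e : n ^ 3 / (4 * κ ^ 2) = (n / κ) ^ 2 * n / 4 := by field_simp
      rw [e]
      nlinarith [mul_le_mul_of_nonneg_left hnS (sq_nonneg c), mul_lt_mul_of_pos_right hc hn]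
    nlinarith [mul_nonneg (by nlinarith : (0 : ℝ) ≤ 3 / 8 * c ^ 2 - 3 / 4 * (12 / 17 * c) ^ 2) hG]

lemma depthBound_le_of_high_peak {p G D : ℝ} (hn : 0 < n) (hδ : 0 ≤ δ) (hp : 1 ≤ p)
    (hpκ : p ≤ κ) (hc0 : 0 ≤ c) (hc : 9 / 4 * (n / κ) ^ 2 < c ^ 2) (hG : 0 ≤ G)
    (hD₁ : 3 / 4 * c ^ 2 * G ≤ D) (hD₂ : 7 / 4 * c ^ 3 - 3 * c ^ 2 * δ ≤ D)
    (hX : ∀ θ : ℝ, 0 ≤ θ →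
      (3 * θ ^ 2 * (n + δ - G) - 2 * θ ^ 3 * p) / 4 + D - 3 * c ^ 2 * δ ≤ X) :
    depthBound κ n (2 * δ) ≤ X := by
  obtain ⟨θ, hθ, hmain⟩ := exists_tangent_bound hn (by linarith : n ≤ n + δ) hp hpκ hG hc0 hc
  have htail : -(120 * δ ^ 3) ≤ 7 / 8 * c ^ 3 - 9 / 2 * c ^ 2 * δ := by
    rcases le_or_gt (36 * δ) (7 * c) with h | h
    · nlinarith [mul_nonneg (by linarith : (0 : ℝ) ≤ 7 * c - 36 * δ) (sq_nonneg c), pow_nonneg hδ 3]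
    · have : c ^ 2 ≤ (36 / 7) ^ 2 * δ ^ 2 := by nlinarith
      nlinarith [mul_le_mul_of_nonneg_right this hδ, pow_nonneg hc0 3]
  have hM : 120 * δ ^ 3 ≤ 2400 * (2 * δ) ^ 2 * max (2 * δ) (n / κ) := by
    nlinarith [mul_le_mul_of_nonneg_left (le_max_left (2 * δ) (n / κ)) (sq_nonneg δ)]
  have := hX θ hθ
  rw [depthBound]
  linarith

end Arithmetic

lemma exists_backward_peak {k : ℕ} {t y : ℕ → ℝ} (hB : (backwardEdges k t).Nonempty) :
    ∃ c : ℝ, 0 ≤ c ∧ (∀ i ∈ backwardEdges k t, |y i| ≤ c ∧ |y (i + 1)| ≤ c) ∧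
      ∃ j ≤ k, |y j| = c := by
  obtain ⟨i₀, hi₀, hmax⟩ := exists_max_image _ (fun i => max |y i| |y (i + 1)|) hB
  have hi₀k := (mem_backwardEdges.1 hi₀).1
  refine ⟨max |y i₀| |y (i₀ + 1)|, (abs_nonneg _).trans (le_max_left _ _),
    fun i hi => max_le_iff.1 (hmax i hi), ?_⟩
  rcases max_choice |y i₀| |y (i₀ + 1)| with h | h
  · exact ⟨i₀, hi₀k.le, h.symm⟩
  · exact ⟨i₀ + 1, hi₀k, h.symm⟩

namespace IsDiagonalPath

variable {k : ℕ} {t y : ℕ → ℝ}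

lemma depthBound_le_of_sum_le_backtrack (hp : IsDiagonalPath k t y) (hκ : (1 : ℝ) ≤ k - 1)
    (hn : 0 < ∑ i ∈ range k, t i) (hnδ : ∑ i ∈ range k, t i ≤ backtrack k t) :
    depthBound ((k : ℝ) - 1) (∑ i ∈ range k, t i) (2 * backtrack k t)
      ≤ ∑ i ∈ range k, weight t y i := by
  refine depthBound_le_of_le_backtrack hκ hn hnδ ?_
  have hL : ∑ i ∈ range k, |t i| = ∑ i ∈ range k, t i + 2 * backtrack k t := by
    rw [sum_abs_eq_forwardLength_add_backtrack, sum_eq_forwardLength_sub_backtrack]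
    ring
  have hback := neg_three_mul_sq_mul_backtrack_le (t := t) (y := y)
    (c := (∑ i ∈ range k, t i + 2 * backtrack k t) / 2) fun i hi => by
      have hik := (mem_backwardEdges.1 hi).1
      constructor <;> linarith [hp.two_mul_abs_le_sum_abs hik.le, hp.two_mul_abs_le_sum_abs hik]
  have hfwd : 0 ≤ ∑ i ∈ forwardEdges k t, weight t y i :=
    sum_nonneg fun i hi => weight_nonneg_of_mem_forwardEdges hi
  rw [sum_range_weight_eq_forward_add_backward]
  linarith

lemma tangent_le_sum_forward_weight_of_lt (hp : IsDiagonalPath k t y)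
    (hδn : backtrack k t < ∑ i ∈ range k, t i) {q : ℝ} (hq : 0 ≤ q) :
    3 * q ^ 2 * (∑ i ∈ range k, t i + backtrack k t) - 18 * backtrack k t * q ^ 2
        - 4 * q ^ 3 * ((#(forwardEdges k t) : ℝ) - 1)
      ≤ ∑ i ∈ forwardEdges k t, weight t y i := by
  rw [sum_eq_forwardLength_sub_backtrack, sub_add_cancel]
  exact hp.tangent_le_sum_forward_weight (hp.two_le_card_forwardEdges hδn) hq

lemma depthBound_le_of_backwardEdges_eq_empty (hp : IsDiagonalPath k t y)
    (hn : 0 < ∑ i ∈ range k, t i) (hB : backwardEdges k t = ∅) :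
    depthBound ((k : ℝ) - 1) (∑ i ∈ range k, t i) (2 * backtrack k t)
      ≤ ∑ i ∈ range k, weight t y i := by
  have hδ : backtrack k t = 0 := by simp [backtrack, hB]
  have h2 := hp.two_le_card_forwardEdges (hδ ▸ hn)
  have hcard : (#(forwardEdges k t) : ℝ) ≤ k := by
    exact_mod_cast (card_le_card (filter_subset _ _)).trans (card_range k).le
  have hp1 : (2 : ℝ) ≤ #(forwardEdges k t) := by exact_mod_cast h2
  rw [hδ, sum_range_weight_eq_forward_add_backward, hB, sum_empty, add_zero]
  refine depthBound_zero_le hn (φ := #(forwardEdges k t) - 1) (by linarith) (by linarith)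
    fun q hq => ?_
  have := hp.tangent_le_sum_forward_weight_of_lt (hδ ▸ hn) hq
  rw [hδ] at this
  linarith

lemma depthBound_le_of_backwardEdges_nonempty (hp : IsDiagonalPath k t y)
    (hn : 0 < ∑ i ∈ range k, t i) (hδn : backtrack k t < ∑ i ∈ range k, t i)
    (hB : (backwardEdges k t).Nonempty) :
    depthBound ((k : ℝ) - 1) (∑ i ∈ range k, t i) (2 * backtrack k t)
      ≤ ∑ i ∈ range k, weight t y i := by
  have hδ := backtrack_nonneg (k := k) (t := t)
  have h2 : (2 : ℝ) ≤ #(forwardEdges k t) := by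
    exact_mod_cast hp.two_le_card_forwardEdges hδn
  have hpk : (#(forwardEdges k t) : ℝ) + 1 ≤ k := by
    have := card_forwardEdges_add_card_backwardEdges_le (k := k) (t := t)
    exact_mod_cast (by have := card_pos.2 hB; omega : #(forwardEdges k t) + 1 ≤ k)
  obtain ⟨c, hc0, hback, j, hj, hyj⟩ := exists_backward_peak (y := y) hB
  rcases le_or_gt (c ^ 2) (9 / 4 * ((∑ i ∈ range k, t i) / ((k : ℝ) - 1)) ^ 2) with hlow | hhigh
  · refine depthBound_le_of_low_peak (φ := #(forwardEdges k t) - 1) hn hδ (by linarith)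
      (by linarith) hlow fun q hq => ?_
    rw [sum_range_weight_eq_forward_add_backward]
    linarith [hp.tangent_le_sum_forward_weight_of_lt hδn hq,
      neg_three_mul_sq_mul_backtrack_le hback]
  · obtain ⟨G, D, hG, hD₁, hD₂, hX⟩ := hp.exists_high_peak_bound hc0 hback hj hyj
    refine depthBound_le_of_high_peak (p := #(forwardEdges k t)) hn hδ (by linarith)
      (by linarith) hc0 hhigh hG hD₁ hD₂ fun θ hθ => ?_
    have hS : forwardLength k t = ∑ i ∈ range k, t i + backtrack k t := by
      rw [sum_eq_forwardLength_sub_backtrack, sub_add_cancel]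
    simpa only [hS] using hX θ hθ

theorem depthBound_le_sum_weight (hp : IsDiagonalPath k t y) (hk : 2 ≤ k)
    (hn : 0 < ∑ i ∈ range k, t i) :
    depthBound ((k : ℝ) - 1) (∑ i ∈ range k, t i) (∑ i ∈ range k, |t i| - ∑ i ∈ range k, t i)
      ≤ ∑ i ∈ range k, weight t y i := by
  have hκ : (1 : ℝ) ≤ k - 1 := by
    have : (2 : ℝ) ≤ k := by exact_mod_cast hk
    linarith
  rw [show ∑ i ∈ range k, |t i| - ∑ i ∈ range k, t i = 2 * backtrack k t by
    rw [sum_abs_eq_forwardLength_add_backtrack, sum_eq_forwardLength_sub_backtrack]; ring]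
  rcases le_or_gt (∑ i ∈ range k, t i) (backtrack k t) with hnδ | hδn
  · exact hp.depthBound_le_of_sum_le_backtrack hκ hn hnδ
  rcases (backwardEdges k t).eq_empty_or_nonempty with hB | hB
  · exact hp.depthBound_le_of_backwardEdges_eq_empty hn hB
  · exact hp.depthBound_le_of_backwardEdges_nonempty hn hδn hB

end IsDiagonalPath

/-- "B_y back from the depths": there exists `C > 0` such that for any ℝ-word `w`
over `X = {a, b}` with coarse length `k(w) ≥ 2` and evaluation having
ℝ²-component `(n, 0)` (with `n > 0`), writing `Δ = ℓ(w) − n` (which is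
nonnegative) and `B(w̄)` for the last coordinate of the evaluation,
`−B(w̄) ≥ n³/(24·(k(w) − 1)²) − C·Δ²·max(Δ, n/(k(w) − 1))`. -/
theorem By_back_from_the_depths :
    ∃ C : ℝ, 0 < C ∧ ∀ n : ℝ, 0 < n → ∀ w : List (Bool × ℝ), 2 ≤ w.length →
      (wordEval w).x = n → (wordEval w).y = 0 →
      0 ≤ wordLen w - n ∧
      -(wordEval w).B ≥ n ^ 3 / (24 * ((w.length : ℝ) - 1) ^ 2)
        - C * (wordLen w - n) ^ 2
          * max (wordLen w - n) (n / ((w.length : ℝ) - 1)) := by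
  refine ⟨400, by norm_num, fun n hn w hw hx hy => ?_⟩
  have hpath : IsDiagonalPath w.length (exponent w) (height w) :=
    ⟨by simp [height, wordEval], by simpa [height] using hy, fun i hi => abs_height_succ_sub w hi⟩
  have hsum : ∑ i ∈ range w.length, exponent w i = n := by
    rw [← wordEval_take_x w le_rfl, List.take_length, hx]
  have hB := six_mul_wordEval_take_B w le_rfl
  rw [List.take_length, hx, hpath.finish] at hB
  have hmain := hpath.depthBound_le_sum_weight hw (hsum ▸ hn)
  rw [hsum, ← wordLen_eq_sum, depthBound] at hmain
  refine ⟨?_, ?_⟩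
  · rw [wordLen_eq_sum, ← hsum]
    exact sub_nonneg.2 (sum_le_sum fun i _ => le_abs_self _)
  · have : n ^ 3 / (24 * ((w.length : ℝ) - 1) ^ 2)
        = n ^ 3 / (4 * ((w.length : ℝ) - 1) ^ 2) / 6 := by
      rw [div_div, mul_right_comm]
      norm_num
    linarith

end Engel
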